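/- arXiv:2310.20397 — 6 statements merged into one kernel-verified Lean document; each statement's English description precedes it below -/
import Mathlib

section
/- Let G ⊆ E and suppose T_1 (the blockwise map using all blocks) is a$\alpha$-fne on G with constant ᾱ ∈ (0,1) and violation at most ε̄ ∈ [0,1). Then the family (T_i)_{i∈𝕀} is a$\alpha$-fne in expectation with respect to the weighted norm ‖·‖_p with constant ᾱ and violation at most p̄ε̄: for all x, y ∈ G, Σ_{i∈𝕀} η_i ‖T_i x − T_i y‖_p² ≤ (1 + p̄ε̄)‖x − y‖_p² − ((1−ᾱ)/ᾱ) Σ_{i∈𝕀} η_i ‖(x − T_i x) − (y − T_i y)‖_p². -/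
open Finset
open scoped RealInnerProductSpace

noncomputable section

variable {m : ℕ} {I : Type*} [Fintype I]
variable {E : Fin m → Type*} [∀ j, NormedAddCommGroup (E j)]
  [∀ j, InnerProductSpace ℝ (E j)] [∀ j, FiniteDimensional ℝ (E j)]

/-- The blockwise map `T_i`: applies `T'_j` on the blocks `j ∈ M i`, identity elsewhere. -/
def blockMap (M : I → Finset (Fin m)) (T' : ∀ j, PiLp 2 E → E j)
    (i : I) (x : PiLp 2 E) : PiLp 2 E :=
  WithLp.toLp 2 (fun j => if j ∈ M i then T' j x else x j)

/-- The squared weighted norm `‖z‖_p²  =  ∑ⱼ pⱼ⁻¹ ‖zⱼ‖²`. -/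
def wNormSq (pw : Fin m → ℝ) (z : PiLp 2 E) : ℝ :=
  ∑ j, (pw j)⁻¹ * ‖z j‖ ^ 2

/-- The weighted norm `‖z‖_p`. -/
def wNorm (pw : Fin m → ℝ) (z : PiLp 2 E) : ℝ :=
  Real.sqrt (wNormSq pw z)

/-! Averaging over `i`, block `j` is updated with total weight `p_j` and left untouched with
weight `1 - p_j`, so the weights `p_j⁻¹` of the norm `‖·‖_p` cancel exactly on updated blocks:
`∑ η_i ‖T_i x - T_i y‖_p² = ‖T₁ x - T₁ y‖² + ‖x - y‖_p² - ‖x - y‖²`, and the averaged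
residual term equals the unweighted residual term of `T₁`. Inserting the inequality for `T₁`
leaves the violation `ε ‖x - y‖²`, which is at most `p̄ ε ‖x - y‖_p²` because `p_j ≤ p̄`. -/

theorem Finset.sum_mul_ite_of_sum_eq_one {ι : Type*} [Fintype ι] {p : ι → Prop}
    [DecidablePred p] {η : ι → ℝ} (hη : ∑ i, η i = 1) (a b : ℝ) :
    ∑ i, η i * (if p i then a else b)
      = (∑ i, if p i then η i else 0) * a + (1 - ∑ i, if p i then η i else 0) * b := by
  rw [← hη, ← Finset.sum_sub_distrib, Finset.sum_mul, Finset.sum_mul, ← Finset.sum_add_distrib]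
  refine Finset.sum_congr rfl fun i _ => ?_
  split_ifs <;> ring

section

omit [∀ j, InnerProductSpace ℝ (E j)] [∀ j, FiniteDimensional ℝ (E j)]

theorem sum_mul_wNormSq (pw : Fin m → ℝ) (η : I → ℝ) (z : I → PiLp 2 E) :
    ∑ i, η i * wNormSq pw (z i) = ∑ j, (pw j)⁻¹ * ∑ i, η i * ‖z i j‖ ^ 2 := by
  simp only [wNormSq, Finset.mul_sum]
  rw [Finset.sum_comm]
  refine Finset.sum_congr rfl fun j _ => Finset.sum_congr rfl fun i _ => by ring

theorem norm_sq_le_mul_wNormSq {pw : Fin m → ℝ} (hp : ∀ j, 0 < pw j) {pbar : ℝ}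
    (hpbar : ∀ j, pw j ≤ pbar) (z : PiLp 2 E) : ‖z‖ ^ 2 ≤ pbar * wNormSq pw z := by
  rw [PiLp.norm_sq_eq_of_L2, wNormSq, Finset.mul_sum]
  refine Finset.sum_le_sum fun j _ => ?_
  rw [← mul_assoc, ← div_eq_mul_inv]
  exact le_mul_of_one_le_left (by positivity) ((one_le_div (hp j)).2 (hpbar j))

section blockMap

omit [Fintype I]

variable (M : I → Finset (Fin m)) (T' : ∀ j, PiLp 2 E → E j)

theorem blockMap_sub_blockMap_apply (i : I) (x y : PiLp 2 E) (j : Fin m) :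
    (blockMap M T' i x - blockMap M T' i y) j
      = if j ∈ M i then T' j x - T' j y else x j - y j := by
  by_cases h : j ∈ M i <;> simp [blockMap, h]

theorem sub_blockMap_sub_sub_blockMap_apply (i : I) (x y : PiLp 2 E) (j : Fin m) :
    ((x - blockMap M T' i x) - (y - blockMap M T' i y)) j
      = if j ∈ M i then (x j - T' j x) - (y j - T' j y) else 0 := by
  by_cases h : j ∈ M i <;> simp [blockMap, h]

variable {M}

theorem norm_sq_blockMap_sub_blockMap_of_eq_univ {i : I} (hi : M i = univ) (x y : PiLp 2 E) :
    ‖blockMap M T' i x - blockMap M T' i y‖ ^ 2 = ∑ j, ‖T' j x - T' j y‖ ^ 2 := by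
  rw [PiLp.norm_sq_eq_of_L2]
  simp only [blockMap_sub_blockMap_apply, hi, Finset.mem_univ, if_true]

theorem norm_sq_sub_blockMap_sub_sub_blockMap_of_eq_univ {i : I} (hi : M i = univ)
    (x y : PiLp 2 E) :
    ‖(x - blockMap M T' i x) - (y - blockMap M T' i y)‖ ^ 2
      = ∑ j, ‖(x j - T' j x) - (y j - T' j y)‖ ^ 2 := by
  rw [PiLp.norm_sq_eq_of_L2]
  simp only [sub_blockMap_sub_sub_blockMap_apply, hi, Finset.mem_univ, if_true]

end blockMap

section expectation

variable {M : I → Finset (Fin m)} (T' : ∀ j, PiLp 2 E → E j) {η : I → ℝ} {pw : Fin m → ℝ}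
  (hpw : ∀ j, pw j = ∑ i : I, if j ∈ M i then η i else 0) (hp : ∀ j, 0 < pw j)
include hpw hp

theorem sum_mul_wNormSq_blockMap_sub_blockMap (hη : ∑ i, η i = 1) (x y : PiLp 2 E) :
    ∑ i, η i * wNormSq pw (blockMap M T' i x - blockMap M T' i y)
      = ∑ j, ‖T' j x - T' j y‖ ^ 2 + wNormSq pw (x - y) - ‖x - y‖ ^ 2 := by
  have hblock : ∀ j, (pw j)⁻¹ * ∑ i, η i * ‖(blockMap M T' i x - blockMap M T' i y) j‖ ^ 2
      = ‖T' j x - T' j y‖ ^ 2 + (pw j)⁻¹ * ‖(x - y) j‖ ^ 2 - ‖(x - y) j‖ ^ 2 := by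
    intro j
    simp only [blockMap_sub_blockMap_apply, apply_ite (‖·‖ ^ 2),
      Finset.sum_mul_ite_of_sum_eq_one hη, ← hpw]
    rw [PiLp.sub_apply]
    field_simp [(hp j).ne']
    ring
  rw [sum_mul_wNormSq, Finset.sum_congr rfl fun j _ => hblock j, PiLp.norm_sq_eq_of_L2,
    Finset.sum_sub_distrib, Finset.sum_add_distrib, wNormSq]

theorem sum_mul_wNormSq_sub_blockMap_sub_sub_blockMap (x y : PiLp 2 E) :
    ∑ i, η i * wNormSq pw ((x - blockMap M T' i x) - (y - blockMap M T' i y))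
      = ∑ j, ‖(x j - T' j x) - (y j - T' j y)‖ ^ 2 := by
  refine (sum_mul_wNormSq pw η _).trans (Finset.sum_congr rfl fun j _ => ?_)
  have hterm : ∀ i, η i * ‖((x - blockMap M T' i x) - (y - blockMap M T' i y)) j‖ ^ 2
      = (if j ∈ M i then η i else 0) * ‖(x j - T' j x) - (y j - T' j y)‖ ^ 2 := by
    intro i
    rw [sub_blockMap_sub_sub_blockMap_apply]
    split_ifs <;> simp
  rw [Finset.sum_congr rfl fun i _ => hterm i, ← Finset.sum_mul, ← hpw,
    inv_mul_cancel_left₀ (hp j).ne']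

end expectation

end

theorem statement1_general
    (M : I → Finset (Fin m))
    (i₁ : I) (hi₁ : M i₁ = Finset.univ)
    (η : I → ℝ) (hηsum : ∑ i : I, η i = 1)
    (pw : Fin m → ℝ) (hpw : ∀ j, pw j = ∑ i : I, if j ∈ M i then η i else 0)
    (hp : ∀ j, 0 < pw j)
    (pbar : ℝ) (hpbar : IsGreatest (Set.range pw) pbar)
    (T' : ∀ j, PiLp 2 E → E j)
    (G : Set (PiLp 2 E))
    (α ε : ℝ) (hε : ε ∈ Set.Ico (0 : ℝ) 1)
    (hT1 : ∀ x ∈ G, ∀ y ∈ G,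
      ‖blockMap M T' i₁ x - blockMap M T' i₁ y‖ ^ 2
        ≤ (1 + ε) * ‖x - y‖ ^ 2
          - ((1 - α) / α) * ‖(x - blockMap M T' i₁ x) - (y - blockMap M T' i₁ y)‖ ^ 2) :
    ∀ x ∈ G, ∀ y ∈ G,
      ∑ i : I, η i * wNormSq pw (blockMap M T' i x - blockMap M T' i y)
        ≤ (1 + pbar * ε) * wNormSq pw (x - y)
          - ((1 - α) / α) *
              ∑ i : I, η i *
                wNormSq pw ((x - blockMap M T' i x) - (y - blockMap M T' i y)) := by
  intro x hx y hy
  have hT1xy := hT1 x hx y hy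
  rw [norm_sq_blockMap_sub_blockMap_of_eq_univ T' hi₁,
    norm_sq_sub_blockMap_sub_sub_blockMap_of_eq_univ T' hi₁] at hT1xy
  have hviolation : ε * ‖x - y‖ ^ 2 ≤ ε * (pbar * wNormSq pw (x - y)) :=
    mul_le_mul_of_nonneg_left
      (norm_sq_le_mul_wNormSq hp (fun j => hpbar.2 (Set.mem_range_self j)) _) hε.1
  rw [sum_mul_wNormSq_blockMap_sub_blockMap T' hpw hp hηsum,
    sum_mul_wNormSq_sub_blockMap_sub_sub_blockMap T' hpw hp]
  linarith

/-- if `T₁` is aα-fne on `G` with constant `α` and violation at most `ε`, then the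
family `(T_i)` is aα-fne in expectation w.r.t. the weighted norm with constant `α` and violation
at most `p̄ ε`. -/
theorem statement1
    (M : I → Finset (Fin m)) (hM : ∀ i, (M i).Nonempty)
    (i₁ : I) (hi₁ : M i₁ = Finset.univ)
    (η : I → ℝ) (hη : ∀ i, 0 ≤ η i) (hηsum : ∑ i : I, η i = 1)
    (pw : Fin m → ℝ) (hpw : ∀ j, pw j = ∑ i : I, if j ∈ M i then η i else 0)
    (hp : ∀ j, 0 < pw j)
    (pbar : ℝ) (hpbar : IsGreatest (Set.range pw) pbar)
    (T' : ∀ j, PiLp 2 E → E j)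
    (G : Set (PiLp 2 E))
    (α ε : ℝ) (hα : α ∈ Set.Ioo (0 : ℝ) 1) (hε : ε ∈ Set.Ico (0 : ℝ) 1)
    (hT1 : ∀ x ∈ G, ∀ y ∈ G,
      ‖blockMap M T' i₁ x - blockMap M T' i₁ y‖ ^ 2
        ≤ (1 + ε) * ‖x - y‖ ^ 2
          - ((1 - α) / α) * ‖(x - blockMap M T' i₁ x) - (y - blockMap M T' i₁ y)‖ ^ 2) :
    ∀ x ∈ G, ∀ y ∈ G,
      ∑ i : I, η i * wNormSq pw (blockMap M T' i x - blockMap M T' i y)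
        ≤ (1 + pbar * ε) * wNormSq pw (x - y)
          - ((1 - α) / α) *
              ∑ i : I, η i *
                wNormSq pw ((x - blockMap M T' i x) - (y - blockMap M T' i y)) :=
  statement1_general M i₁ hi₁ η hηsum pw hpw hp pbar hpbar T' G α ε hε hT1
end
end

section
/- For all x, y ∈ E, the expected weighted transport discrepancy of the blockwise updates satisfies the exact identity Σ_{i∈𝕀} η_i ‖(x − T_i x) − (y − T_i y)‖_p² = ‖(x − T_1 x) − (y − T_1 y)‖², where T_1 x = (T'_1(x),…,T'_m(x)) is the map using all blocks. -/
open Finset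
open scoped RealInnerProductSpace

noncomputable section

variable {m : ℕ} {I : Type*} [Fintype I]
variable {E : Fin m → Type*} [∀ j, NormedAddCommGroup (E j)]
  [∀ j, InnerProductSpace ℝ (E j)] [∀ j, FiniteDimensional ℝ (E j)]

/-!
Block `j` of the discrepancy `(x - Tᵢx) - (y - Tᵢy)` is block `j` of the full discrepancy when
`j ∈ Mᵢ` and zero otherwise. Exchanging the sums over `i` and `j`, block `j` therefore enters
the left-hand side with total weight `(∑_{i : j ∈ Mᵢ} ηᵢ) · pⱼ⁻¹ = 1`.
-/

theorem sum_mul_sum_inv_mul_ite_eq {ι κ : Type*} [Fintype ι] [Fintype κ] [DecidableEq κ]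
    (M : ι → Finset κ) (η : ι → ℝ) (p : κ → ℝ) (hp : ∀ j, p j = ∑ i, if j ∈ M i then η i else 0)
    (hp₀ : ∀ j, p j ≠ 0) (a : κ → ℝ) :
    ∑ i, η i * ∑ j, (p j)⁻¹ * (if j ∈ M i then a j else 0) = ∑ j, a j := by
  calc ∑ i, η i * ∑ j, (p j)⁻¹ * (if j ∈ M i then a j else 0)
      = ∑ j, (∑ i, if j ∈ M i then η i else 0) * ((p j)⁻¹ * a j) := by
        simp only [mul_sum, sum_mul, mul_ite, ite_mul, mul_zero, zero_mul]
        rw [sum_comm]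
    _ = ∑ j, a j := by
        refine sum_congr rfl fun j _ => ?_
        rw [← hp j, ← mul_assoc, mul_inv_cancel₀ (hp₀ j), one_mul]

section

variable {ι : Type*} {F : Fin m → Type*} [∀ j, NormedAddCommGroup (F j)]

theorem sub_blockMap_sub_apply (M : ι → Finset (Fin m)) (T' : ∀ j, PiLp 2 F → F j) (i : ι)
    (x y : PiLp 2 F) (j : Fin m) :
    ((x - blockMap M T' i x) - (y - blockMap M T' i y)) j
      = if j ∈ M i then (x j - T' j x) - (y j - T' j y) else 0 := by
  simp only [PiLp.sub_apply, blockMap]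
  split_ifs <;> abel

theorem wNormSq_sub_blockMap_sub (M : ι → Finset (Fin m)) (T' : ∀ j, PiLp 2 F → F j) (i : ι)
    (pw : Fin m → ℝ) (x y : PiLp 2 F) :
    wNormSq pw ((x - blockMap M T' i x) - (y - blockMap M T' i y))
      = ∑ j, (pw j)⁻¹ * if j ∈ M i then ‖(x j - T' j x) - (y j - T' j y)‖ ^ 2 else 0 := by
  simp only [wNormSq, sub_blockMap_sub_apply, apply_ite (‖·‖ ^ 2), norm_zero, zero_pow two_ne_zero]

theorem norm_sq_sub_blockMap_sub_of_eq_univ (M : ι → Finset (Fin m)) (T' : ∀ j, PiLp 2 F → F j)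
    {i : ι} (hi : M i = Finset.univ) (x y : PiLp 2 F) :
    ‖(x - blockMap M T' i x) - (y - blockMap M T' i y)‖ ^ 2
      = ∑ j, ‖(x j - T' j x) - (y j - T' j y)‖ ^ 2 := by
  rw [PiLp.norm_sq_eq_of_L2]
  refine sum_congr rfl fun j _ => ?_
  rw [sub_blockMap_sub_apply, hi, if_pos (mem_univ j)]

end

theorem statement3_general
    (M : I → Finset (Fin m))
    (i₁ : I) (hi₁ : M i₁ = Finset.univ)
    (η : I → ℝ)
    (pw : Fin m → ℝ) (hpw : ∀ j, pw j = ∑ i : I, if j ∈ M i then η i else 0)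
    (hp : ∀ j, 0 < pw j)
    (T' : ∀ j, PiLp 2 E → E j) :
    ∀ x y : PiLp 2 E,
      ∑ i : I, η i * wNormSq pw ((x - blockMap M T' i x) - (y - blockMap M T' i y))
        = ‖(x - blockMap M T' i₁ x) - (y - blockMap M T' i₁ y)‖ ^ 2 := by
  intro x y
  simp only [wNormSq_sub_blockMap_sub, norm_sq_sub_blockMap_sub_of_eq_univ M T' hi₁]
  exact sum_mul_sum_inv_mul_ite_eq M η pw hpw (fun j => (hp j).ne') _

/-- exact identity for the expected weighted transport discrepancy:
`∑ᵢ ηᵢ ‖(x−Tᵢx) − (y−Tᵢy)‖_p² = ‖(x−T₁x) − (y−T₁y)‖²`. -/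
theorem statement3
    (M : I → Finset (Fin m)) (hM : ∀ i, (M i).Nonempty)
    (i₁ : I) (hi₁ : M i₁ = Finset.univ)
    (η : I → ℝ) (hη : ∀ i, 0 ≤ η i) (hηsum : ∑ i : I, η i = 1)
    (pw : Fin m → ℝ) (hpw : ∀ j, pw j = ∑ i : I, if j ∈ M i then η i else 0)
    (hp : ∀ j, 0 < pw j)
    (T' : ∀ j, PiLp 2 E → E j) :
    ∀ x y : PiLp 2 E,
      ∑ i : I, η i * wNormSq pw ((x - blockMap M T' i x) - (y - blockMap M T' i y))
        = ‖(x - blockMap M T' i₁ x) - (y - blockMap M T' i₁ y)‖ ^ 2 :=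
  statement3_general M i₁ hi₁ η pw hpw hp T'
end
end

section
/- Let G ⊆ E, suppose T_1 (the blockwise map using all blocks) is α-fne on G with constant ᾱ ∈ (0,1) and violation 0, and suppose the set of common fixed points C := {x ∈ G : T_i x = x for every i ∈ 𝕀 with η_i > 0} is nonempty. Then the family (T_i)_{i∈𝕀} is a paracontraction in expectation with respect to the weighted norm: for every y ∈ C and every x ∈ G \ C, Σ_{i∈𝕀} η_i ‖T_i x − T_i y‖_p² < ‖x − y‖_p². -/
/-!
Let `y ∈ C`. Positivity of every `p_j` means each block is updated by some `T_i` with `η_i > 0`,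
so `C` is exactly the fixed point set of `T₁` within `G`. Averaging over `i`, block `j` is moved
with probability `p_j`, and the weight `p_j⁻¹` cancels it:
`∑ᵢ ηᵢ ‖Tᵢ x - Tᵢ y‖_p² = ‖T₁ x - y‖² + ‖x - y‖_p² - ‖x - y‖²`.
Finally an α-fne map with `T₁ y = y` satisfies `‖T₁ x - y‖² < ‖x - y‖²` whenever `T₁ x ≠ x`.
-/

open Finset
open scoped RealInnerProductSpace

noncomputable section

variable {m : ℕ} {I : Type*} [Fintype I]
variable {E : Fin m → Type*} [∀ j, NormedAddCommGroup (E j)]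
  [∀ j, InnerProductSpace ℝ (E j)] [∀ j, FiniteDimensional ℝ (E j)]

theorem norm_sub_sq_lt_of_fne {X : Type*} [NormedAddCommGroup X] {F : X → X} {α : ℝ}
    (hα : α ∈ Set.Ioo (0 : ℝ) 1) {x y : X}
    (hF : ‖F x - F y‖ ^ 2 ≤ ‖x - y‖ ^ 2 - ((1 - α) / α) * ‖(x - F x) - (y - F y)‖ ^ 2)
    (hy : F y = y) (hx : F x ≠ x) :
    ‖F x - y‖ ^ 2 < ‖x - y‖ ^ 2 := by
  rw [hy, sub_self, sub_zero] at hF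
  have hc : 0 < (1 - α) / α := div_pos (by linarith [hα.2]) hα.1
  have hd : 0 < ‖x - F x‖ ^ 2 := by
    have : x - F x ≠ 0 := sub_ne_zero.mpr hx.symm
    positivity
  nlinarith

section BlockMap

variable {ι : Type*} {X : Fin m → Type*} {M : ι → Finset (Fin m)} {T' : ∀ j, PiLp 2 X → X j}

theorem blockMap_apply (i : ι) (x : PiLp 2 X) (j : Fin m) :
    blockMap M T' i x j = if j ∈ M i then T' j x else x j :=
  rfl

theorem blockMap_eq_self_iff {i : ι} {x : PiLp 2 X} :
    blockMap M T' i x = x ↔ ∀ j ∈ M i, T' j x = x j := by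
  constructor
  · intro h j hj
    simpa [blockMap_apply, hj] using congrArg (· j) h
  · intro h
    ext j
    by_cases hj : j ∈ M i <;> simp [blockMap_apply, hj, h]

theorem blockMap_eq_self_iff_of_eq_univ {i : ι} (hi : M i = univ) {x : PiLp 2 X} :
    blockMap M T' i x = x ↔ ∀ j, T' j x = x j := by
  simp [blockMap_eq_self_iff, hi]

theorem forall_blockMap_eq_self_iff [Fintype ι] {η : ι → ℝ} {pw : Fin m → ℝ}
    (hpw : ∀ j, pw j = ∑ i : ι, if j ∈ M i then η i else 0) (hp : ∀ j, 0 < pw j)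
    {x : PiLp 2 X} :
    (∀ i, 0 < η i → blockMap M T' i x = x) ↔ ∀ j, T' j x = x j := by
  constructor
  · intro h j
    obtain ⟨i, hji, hηi⟩ : ∃ i, j ∈ M i ∧ 0 < η i := by
      by_contra! hle
      have : pw j ≤ 0 := by
        rw [hpw]
        exact sum_nonpos fun i _ => by split_ifs with hji <;> simp [hle i, hji]
      linarith [hp j]
    exact blockMap_eq_self_iff.mp (h i hηi) j hji
  · exact fun h i _ => blockMap_eq_self_iff.mpr fun j _ => h j

theorem sum_mul_ite_mem [Fintype ι] {η : ι → ℝ} (hηsum : ∑ i : ι, η i = 1) (j : Fin m)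
    (a b : ℝ) :
    ∑ i, η i * (if j ∈ M i then a else b)
      = (∑ i, if j ∈ M i then η i else 0) * a
        + (1 - ∑ i, if j ∈ M i then η i else 0) * b := by
  rw [← hηsum, ← sum_sub_distrib, sum_mul, sum_mul, ← sum_add_distrib]
  refine sum_congr rfl fun i _ => ?_
  split_ifs <;> ring

theorem sum_mul_wNormSq_blockMap_sub [Fintype ι] [∀ j, NormedAddCommGroup (X j)] {η : ι → ℝ}
    (hηsum : ∑ i : ι, η i = 1) {pw : Fin m → ℝ}
    (hpw : ∀ j, pw j = ∑ i : ι, if j ∈ M i then η i else 0) (hp : ∀ j, pw j ≠ 0)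
    {x y : PiLp 2 X} (hy : ∀ j, T' j y = y j) :
    ∑ i, η i * wNormSq pw (blockMap M T' i x - blockMap M T' i y)
      = ∑ j, ‖T' j x - y j‖ ^ 2 + wNormSq pw (x - y) - ‖x - y‖ ^ 2 := by
  have hblock : ∀ j, ∑ i, η i * ‖blockMap M T' i x j - blockMap M T' i y j‖ ^ 2
      = pw j * ‖T' j x - y j‖ ^ 2 + (1 - pw j) * ‖x j - y j‖ ^ 2 := by
    intro j
    rw [hpw, ← sum_mul_ite_mem hηsum]
    refine sum_congr rfl fun i _ => ?_
    by_cases hj : j ∈ M i <;> simp [blockMap_apply, hj, hy j]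
  simp only [wNormSq, mul_sum, PiLp.norm_sq_eq_of_L2, PiLp.sub_apply]
  rw [sum_comm, ← sum_add_distrib, ← sum_sub_distrib]
  refine sum_congr rfl fun j _ => ?_
  simp only [mul_left_comm (η _), ← mul_sum, hblock j]
  field_simp [hp j]
  ring

theorem norm_sq_blockMap_sub_of_eq_univ [∀ j, NormedAddCommGroup (X j)] {i : ι} (hi : M i = univ)
    (x y : PiLp 2 X) :
    ‖blockMap M T' i x - y‖ ^ 2 = ∑ j, ‖T' j x - y j‖ ^ 2 := by
  simp [PiLp.norm_sq_eq_of_L2, blockMap_apply, hi]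

end BlockMap

theorem statement4_general
    (M : I → Finset (Fin m))
    (i₁ : I) (hi₁ : M i₁ = Finset.univ)
    (η : I → ℝ) (hηsum : ∑ i : I, η i = 1)
    (pw : Fin m → ℝ) (hpw : ∀ j, pw j = ∑ i : I, if j ∈ M i then η i else 0)
    (hp : ∀ j, 0 < pw j)
    (T' : ∀ j, PiLp 2 E → E j)
    (G : Set (PiLp 2 E))
    (α : ℝ) (hα : α ∈ Set.Ioo (0 : ℝ) 1)
    (hT1 : ∀ x ∈ G, ∀ y ∈ G,
      ‖blockMap M T' i₁ x - blockMap M T' i₁ y‖ ^ 2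
        ≤ ‖x - y‖ ^ 2
          - ((1 - α) / α) * ‖(x - blockMap M T' i₁ x) - (y - blockMap M T' i₁ y)‖ ^ 2)
    (C : Set (PiLp 2 E))
    (hC : C = {x ∈ G | ∀ i, 0 < η i → blockMap M T' i x = x}) :
    ∀ y ∈ C, ∀ x ∈ G \ C,
      ∑ i : I, η i * wNormSq pw (blockMap M T' i x - blockMap M T' i y)
        < wNormSq pw (x - y) := by
  subst hC
  rintro y ⟨hyG, hyC⟩ x ⟨hxG, hxC⟩
  have hyfix : ∀ j, T' j y = y j := (forall_blockMap_eq_self_iff hpw hp).mp hyC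
  have hy₁ : blockMap M T' i₁ y = y := (blockMap_eq_self_iff_of_eq_univ hi₁).mpr hyfix
  have hx₁ : blockMap M T' i₁ x ≠ x := fun hx =>
    hxC ⟨hxG, (forall_blockMap_eq_self_iff hpw hp).mpr
      ((blockMap_eq_self_iff_of_eq_univ hi₁).mp hx)⟩
  have hstrict := norm_sub_sq_lt_of_fne hα (hT1 x hxG y hyG) hy₁ hx₁
  rw [norm_sq_blockMap_sub_of_eq_univ hi₁] at hstrict
  rw [sum_mul_wNormSq_blockMap_sub hηsum hpw (fun j => (hp j).ne') hyfix]
  linarith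

/-- if `T₁` is α-fne on `G` (no violation) and the common fixed point set `C` is
nonempty, then the family `(T_i)` is a paracontraction in expectation w.r.t. the weighted norm. -/
theorem statement4
    (M : I → Finset (Fin m)) (hM : ∀ i, (M i).Nonempty)
    (i₁ : I) (hi₁ : M i₁ = Finset.univ)
    (η : I → ℝ) (hη : ∀ i, 0 ≤ η i) (hηsum : ∑ i : I, η i = 1)
    (pw : Fin m → ℝ) (hpw : ∀ j, pw j = ∑ i : I, if j ∈ M i then η i else 0)
    (hp : ∀ j, 0 < pw j)
    (T' : ∀ j, PiLp 2 E → E j)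
    (G : Set (PiLp 2 E))
    (α : ℝ) (hα : α ∈ Set.Ioo (0 : ℝ) 1)
    (hT1 : ∀ x ∈ G, ∀ y ∈ G,
      ‖blockMap M T' i₁ x - blockMap M T' i₁ y‖ ^ 2
        ≤ ‖x - y‖ ^ 2
          - ((1 - α) / α) * ‖(x - blockMap M T' i₁ x) - (y - blockMap M T' i₁ y)‖ ^ 2)
    (C : Set (PiLp 2 E))
    (hC : C = {x ∈ G | ∀ i, 0 < η i → blockMap M T' i x = x})
    (hCne : C.Nonempty) :
    ∀ y ∈ C, ∀ x ∈ G \ C,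
      ∑ i : I, η i * wNormSq pw (blockMap M T' i x - blockMap M T' i y)
        < wNormSq pw (x - y) :=
  statement4_general M i₁ hi₁ η hηsum pw hpw hp T' G α hα hT1 C hC
end
end

section
/- Let G ⊆ E be compact, let each T'_j be continuous with each T_i a self-map of G, let C := {x ∈ G : T_i x = x for every i with η_i > 0} be nonempty, and suppose the squared paracontraction-in-expectation property holds: Σ_{i∈𝕀} η_i ‖T_i x − y‖_p² < ‖x − y‖_p² for every y ∈ C and every x ∈ G \ C. Then the Markov operator 𝒫 is a paracontraction with respect to d_{W2,p}: for every Borel probability measure π supported in C and every μ ∈ 𝒫₂(G) with μ(G \ C) > 0, one has d_{W2,p}(μ𝒫, π) < d_{W2,p}(μ, π). -/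
/-! Given a coupling `γ` of `μ` and `π`, move its first coordinate by `T i` with probability `η i`:
this gives a coupling of `μ𝒫` and `π` of squared cost `∫ ∑ᵢ ηᵢ ‖Tᵢ x - y‖_p² dγ`. On `G × C` the
integrand is at most `‖x - y‖_p²` (for `x ∈ C` because `x` is fixed, otherwise by the
paracontraction property), and by compactness it is smaller by some `ε > 0` on `K × C`, where
`K ⊆ G \ C` is compact with `μ K > 0`. Since `γ (K × C) = μ K`, every coupling of `(μ, π)` loses
at least `ε μ(K)` in squared cost, uniformly in `γ`; hence the infimum drops strictly, and no
optimal coupling is needed. -/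

open Finset MeasureTheory Filter
open scoped RealInnerProductSpace

noncomputable section

variable {m : ℕ} {I : Type*} [Fintype I]
variable {E : Fin m → Type*} [∀ j, NormedAddCommGroup (E j)]
  [∀ j, InnerProductSpace ℝ (E j)] [∀ j, FiniteDimensional ℝ (E j)]
variable [∀ j, MeasurableSpace (E j)] [∀ j, BorelSpace (E j)]
variable [MeasurableSpace (PiLp 2 E)] [BorelSpace (PiLp 2 E)]

/-- `γ` is a coupling of `μ` and `ν`. -/
def IsCoupling (γ : Measure (PiLp 2 E × PiLp 2 E)) (μ ν : Measure (PiLp 2 E)) : Prop :=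
  IsProbabilityMeasure γ ∧ γ.map Prod.fst = μ ∧ γ.map Prod.snd = ν

/-- The transport cost `(∫ ‖x−y‖_p² dγ)^{1/2}` of a coupling `γ`. -/
def couplingCost (pw : Fin m → ℝ) (γ : Measure (PiLp 2 E × PiLp 2 E)) : ℝ :=
  Real.sqrt (∫ z, wNormSq pw (z.1 - z.2) ∂γ)

/-- The weighted Wasserstein-2 distance `d_{W2,p}`. -/
def W2 (pw : Fin m → ℝ) (μ ν : Measure (PiLp 2 E)) : ℝ :=
  sInf {r | ∃ γ, IsCoupling γ μ ν ∧ r = couplingCost pw γ}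

/-- `γ` is an optimal coupling of `(μ, ν)` w.r.t. `d_{W2,p}`. -/
def IsOptimalCoupling (pw : Fin m → ℝ) (γ : Measure (PiLp 2 E × PiLp 2 E))
    (μ ν : Measure (PiLp 2 E)) : Prop :=
  IsCoupling γ μ ν ∧ couplingCost pw γ = W2 pw μ ν

/-- The Markov operator `μ ↦ μ𝒫 = ∑ᵢ ηᵢ (Tᵢ)_* μ`. -/
def markovOp (η : I → ℝ) (T : I → PiLp 2 E → PiLp 2 E)
    (μ : Measure (PiLp 2 E)) : Measure (PiLp 2 E) :=
  ∑ i : I, (ENNReal.ofReal (η i)) • μ.map (T i)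

/-- `μ ∈ 𝒫₂(G)` : Borel probability measure concentrated on `G` with finite second moment. -/
def MemP2 (G : Set (PiLp 2 E)) (μ : Measure (PiLp 2 E)) : Prop :=
  IsProbabilityMeasure μ ∧ μ Gᶜ = 0 ∧ Integrable (fun x => ‖x‖ ^ 2) μ

/-- `d_{W2,p}(μ, inv𝒫)` : distance from `μ` to the invariant measures in `𝒫₂(G)`. -/
def dInv (pw : Fin m → ℝ) (η : I → ℝ) (T : I → PiLp 2 E → PiLp 2 E)
    (G : Set (PiLp 2 E)) (μ : Measure (PiLp 2 E)) : ℝ :=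
  sInf {r | ∃ π, markovOp η T π = π ∧ MemP2 G π ∧ r = W2 pw μ π}

/-- The expected weighted transport discrepancy `∑ᵢ ηᵢ ψ_p(x, y, Tᵢx, Tᵢy)`. -/
def discrep (pw : Fin m → ℝ) (η : I → ℝ) (T : I → PiLp 2 E → PiLp 2 E)
    (z : PiLp 2 E × PiLp 2 E) : ℝ :=
  ∑ i : I, η i * wNormSq pw ((z.1 - T i z.1) - (z.2 - T i z.2))

/-- The invariant Markov transport discrepancy `Ψ`. -/
def Psi (pw : Fin m → ℝ) (η : I → ℝ) (T : I → PiLp 2 E → PiLp 2 E)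
    (G : Set (PiLp 2 E)) (μ : Measure (PiLp 2 E)) : ℝ :=
  sInf {r | ∃ π γ, markovOp η T π = π ∧ MemP2 G π ∧ IsOptimalCoupling pw γ μ π ∧
    r = Real.sqrt (∫ z, discrep pw η T z ∂γ)}

end

theorem IsCompact.exists_pos_forall_add_le {α : Type*} [TopologicalSpace α] {K : Set α}
    (hK : IsCompact K) {f g : α → ℝ} (hf : ContinuousOn f K) (hg : ContinuousOn g K)
    (hlt : ∀ z ∈ K, g z < f z) : ∃ ε > 0, ∀ z ∈ K, g z + ε ≤ f z := by
  rcases K.eq_empty_or_nonempty with rfl | hne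
  · exact ⟨1, one_pos, by simp⟩
  obtain ⟨z₀, hz₀, hmin⟩ := hK.exists_isMinOn hne (hf.sub hg)
  refine ⟨f z₀ - g z₀, sub_pos.2 (hlt z₀ hz₀), fun z hz => ?_⟩
  have hz₀z := isMinOn_iff.1 hmin z hz
  simp only [Pi.sub_apply] at hz₀z
  linarith

theorem sum_mul_apply_eq_of_isFixedPt {ι X : Type*} [Fintype ι] {η : ι → ℝ} (hη : ∀ i, 0 ≤ η i)
    (hηsum : ∑ i, η i = 1) {T : ι → X → X} {x : X}
    (hx : ∀ i, 0 < η i → Function.IsFixedPt (T i) x) (F : X → ℝ) :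
    ∑ i, η i * F (T i x) = F x :=
  calc ∑ i, η i * F (T i x) = ∑ i, η i * F x := Finset.sum_congr rfl fun i _ => by
        rcases (hη i).eq_or_lt with h | h
        · rw [← h, zero_mul, zero_mul]
        · rw [(hx i h).eq]
    _ = F x := by rw [← Finset.sum_mul, hηsum, one_mul]

section Integrals

variable {α : Type*} [TopologicalSpace α] [MeasurableSpace α] [OpensMeasurableSpace α]
  {γ : Measure α} [IsFiniteMeasure γ] {S : Set α}

theorem Continuous.integrable_of_ae_mem_isCompact {F : α → ℝ} (hF : Continuous F)
    (hS : IsCompact S) (hγS : ∀ᵐ z ∂γ, z ∈ S) : Integrable F γ := by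
  obtain ⟨B, hB⟩ := hS.exists_bound_of_continuousOn hF.continuousOn
  exact (integrable_const B).mono' hF.aestronglyMeasurable (hγS.mono hB)

theorem mul_measureReal_le_integral {F : α → ℝ} (hF : Continuous F) (hS : IsCompact S)
    (hγS : ∀ᵐ z ∂γ, z ∈ S) {A : Set α} (hA : MeasurableSet A) {ε : ℝ}
    (hFS : ∀ z ∈ S, 0 ≤ F z) (hFA : ∀ z ∈ A, ε ≤ F z) : ε * γ.real A ≤ ∫ z, F z ∂γ := by
  have hind : ∀ z ∈ S, A.indicator (fun _ => ε) z ≤ F z := fun z hz => by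
    by_cases hzA : z ∈ A
    · simpa [Set.indicator_of_mem hzA] using hFA z hzA
    · simpa [Set.indicator_of_notMem hzA] using hFS z hz
  calc ε * γ.real A = ∫ z, A.indicator (fun _ => ε) z ∂γ := by
        rw [integral_indicator_const _ hA, smul_eq_mul, mul_comm]
    _ ≤ ∫ z, F z ∂γ := integral_mono_ae ((integrable_const ε).indicator hA)
        (hF.integrable_of_ae_mem_isCompact hS hγS) (hγS.mono hind)

end Integrals

section BlockMap

variable {m : ℕ} {E : Fin m → Type*} [∀ j, NormedAddCommGroup (E j)]

@[fun_prop]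
theorem continuous_wNormSq (pw : Fin m → ℝ) : Continuous (wNormSq pw : PiLp 2 E → ℝ) :=
  continuous_finsetSum _ fun j _ => continuous_const.mul ((PiLp.continuous_apply 2 E j).norm.pow 2)

theorem wNormSq_nonneg {pw : Fin m → ℝ} (hpw : ∀ j, 0 ≤ pw j) (z : PiLp 2 E) :
    0 ≤ wNormSq pw z :=
  Finset.sum_nonneg fun j _ => mul_nonneg (inv_nonneg.2 (hpw j)) (by positivity)

theorem continuous_blockMap {I : Type*} (M : I → Finset (Fin m)) {T' : ∀ j, PiLp 2 E → E j}
    (hT' : ∀ j, Continuous (T' j)) (i : I) : Continuous (blockMap M T' i) :=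
  (PiLp.continuous_toLp 2 E).comp <| continuous_pi fun j =>
    continuous_if_const _ (fun _ => hT' j) (fun _ => PiLp.continuous_apply 2 E j)

end BlockMap

section Coupling

variable {m : ℕ} {E : Fin m → Type*} [MeasurableSpace (PiLp 2 E)]
  {γ : Measure (PiLp 2 E × PiLp 2 E)} {μ ν : Measure (PiLp 2 E)}

theorem isCoupling_prod (μ ν : Measure (PiLp 2 E)) [IsProbabilityMeasure μ]
    [IsProbabilityMeasure ν] : IsCoupling (μ.prod ν) μ ν :=
  ⟨inferInstance, by simp, by simp⟩

theorem IsCoupling.ae_mem_prod (hγ : IsCoupling γ μ ν) {s t : Set (PiLp 2 E)}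
    (hs : μ sᶜ = 0) (ht : ν tᶜ = 0) : ∀ᵐ z ∂γ, z ∈ s ×ˢ t := by
  obtain ⟨-, rfl, rfl⟩ := hγ
  filter_upwards [ae_of_ae_map measurable_fst.aemeasurable (mem_ae_iff.2 hs),
    ae_of_ae_map measurable_snd.aemeasurable (mem_ae_iff.2 ht)] with z h₁ h₂ using ⟨h₁, h₂⟩

theorem IsCoupling.measureReal_prod (hγ : IsCoupling γ μ ν) {s t : Set (PiLp 2 E)}
    (hs : MeasurableSet s) (ht : MeasurableSet t) (hνt : ν tᶜ = 0) :
    γ.real (s ×ˢ t) = μ.real s := by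
  obtain ⟨-, rfl, rfl⟩ := hγ
  rw [Measure.map_apply measurable_snd ht.compl, Set.preimage_compl] at hνt
  rw [measureReal_def, measureReal_def, Set.prod_eq, measure_inter_conull hνt,
    Measure.map_apply measurable_fst hs]

variable [∀ j, NormedAddCommGroup (E j)] {pw : Fin m → ℝ}

theorem couplingCost_sq (hpw : ∀ j, 0 ≤ pw j) (γ : Measure (PiLp 2 E × PiLp 2 E)) :
    couplingCost pw γ ^ 2 = ∫ z, wNormSq pw (z.1 - z.2) ∂γ :=
  Real.sq_sqrt (integral_nonneg fun _ => wNormSq_nonneg hpw _)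

theorem W2_nonneg : 0 ≤ W2 pw μ ν :=
  Real.sInf_nonneg fun _ ⟨_, _, hr⟩ => hr ▸ Real.sqrt_nonneg _

theorem W2_le_couplingCost (hγ : IsCoupling γ μ ν) : W2 pw μ ν ≤ couplingCost pw γ :=
  csInf_le ⟨0, fun _ ⟨_, _, hr⟩ => hr ▸ Real.sqrt_nonneg _⟩ ⟨γ, hγ, rfl⟩

theorem W2_lt_of_forall_isCoupling {π : Measure (PiLp 2 E)} {c : ℝ}
    (hne : ∃ γ, IsCoupling γ μ π) (hc : 0 < c)
    (h : ∀ γ, IsCoupling γ μ π →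
      ∃ γ', IsCoupling γ' ν π ∧ couplingCost pw γ' ^ 2 + c ≤ couplingCost pw γ ^ 2) :
    W2 pw ν π < W2 pw μ π := by
  set B := W2 pw ν π
  have hB : 0 ≤ B := W2_nonneg
  have hbound : ∀ γ, IsCoupling γ μ π → √(B ^ 2 + c) ≤ couplingCost pw γ := fun γ hγ => by
    obtain ⟨γ', hγ', hcost⟩ := h γ hγ
    have hBγ' : B ^ 2 ≤ couplingCost pw γ' ^ 2 := pow_le_pow_left₀ hB (W2_le_couplingCost hγ') 2
    exact (Real.sqrt_le_left (y := couplingCost pw γ) (Real.sqrt_nonneg _)).2 (by linarith)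
  obtain ⟨γ₀, hγ₀⟩ := hne
  calc B = √(B ^ 2) := (Real.sqrt_sq hB).symm
    _ < √(B ^ 2 + c) := Real.sqrt_lt_sqrt (sq_nonneg _) (by linarith)
    _ ≤ W2 pw μ π := le_csInf ⟨_, γ₀, hγ₀, rfl⟩ fun _ ⟨γ, hγ, hr⟩ => hr ▸ hbound γ hγ

end Coupling

section MarkovCoupling

variable {m : ℕ} {I : Type*} [Fintype I] {E : Fin m → Type*} [MeasurableSpace (PiLp 2 E)]
  {η : I → ℝ} {T : I → PiLp 2 E → PiLp 2 E} {γ : Measure (PiLp 2 E × PiLp 2 E)}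

noncomputable def markovCoupling (η : I → ℝ) (T : I → PiLp 2 E → PiLp 2 E)
    (γ : Measure (PiLp 2 E × PiLp 2 E)) : Measure (PiLp 2 E × PiLp 2 E) :=
  ∑ i, ENNReal.ofReal (η i) • γ.map (Prod.map (T i) id)

theorem IsCoupling.markovCoupling {μ ν : Measure (PiLp 2 E)} (hγ : IsCoupling γ μ ν)
    (hT : ∀ i, Measurable (T i)) (hη : ∀ i, 0 ≤ η i) (hηsum : ∑ i, η i = 1) :
    IsCoupling (markovCoupling η T γ) (markovOp η T μ) ν := by
  obtain ⟨hγ, rfl, rfl⟩ := hγ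
  have hΦ : ∀ i, Measurable (Prod.map (T i) (id : PiLp 2 E → PiLp 2 E)) :=
    fun i => (hT i).prodMap measurable_id
  have hsnd : (_root_.markovCoupling η T γ).map Prod.snd = γ.map Prod.snd := by
    rw [_root_.markovCoupling, Measure.map_finset_sum' (by fun_prop)]
    simp only [Measure.map_smul, Measure.map_map measurable_snd (hΦ _), Prod.map_snd',
      Function.id_comp]
    rw [← Finset.sum_smul, ← ENNReal.ofReal_sum_of_nonneg fun i _ => hη i, hηsum,
      ENNReal.ofReal_one, one_smul]
  refine ⟨⟨?_⟩, ?_, hsnd⟩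
  · simpa [Measure.map_apply measurable_snd MeasurableSet.univ] using
      congrArg (· Set.univ) hsnd
  · rw [_root_.markovCoupling, Measure.map_finset_sum' (by fun_prop)]
    simp only [markovOp, Measure.map_smul, Measure.map_map measurable_fst (hΦ _), Prod.map_fst',
      Measure.map_map (hT _) measurable_fst]

theorem integral_markovCoupling (hT : ∀ i, Measurable (T i)) (hη : ∀ i, 0 ≤ η i)
    {F : PiLp 2 E × PiLp 2 E → ℝ} (hF : StronglyMeasurable F)
    (hFT : ∀ i, Integrable (fun z => F (T i z.1, z.2)) γ) :
    ∫ z, F z ∂markovCoupling η T γ = ∑ i, η i * ∫ z, F (T i z.1, z.2) ∂γ := by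
  have hΦ : ∀ i, Measurable (Prod.map (T i) (id : PiLp 2 E → PiLp 2 E)) :=
    fun i => (hT i).prodMap measurable_id
  rw [markovCoupling, integral_finsetSum_measure fun i _ =>
    ((integrable_map_measure hF.aestronglyMeasurable (hΦ i).aemeasurable).2 (hFT i)).smul_measure
      ENNReal.ofReal_ne_top]
  refine Finset.sum_congr rfl fun i _ => ?_
  rw [integral_smul_measure, integral_map (hΦ i).aemeasurable hF.aestronglyMeasurable,
    ENNReal.toReal_ofReal (hη i), smul_eq_mul]
  rfl

variable [∀ j, NormedAddCommGroup (E j)] [∀ j, SecondCountableTopology (E j)]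
  [BorelSpace (PiLp 2 E)]

theorem couplingCost_markovCoupling_sq_add_le (hη : ∀ i, 0 ≤ η i) (hT : ∀ i, Continuous (T i))
    {pw : Fin m → ℝ} (hpw : ∀ j, 0 ≤ pw j) [IsFiniteMeasure γ] {S A : Set (PiLp 2 E × PiLp 2 E)}
    (hS : IsCompact S) (hγS : ∀ᵐ z ∂γ, z ∈ S) (hA : MeasurableSet A) {ε : ℝ}
    (hle : ∀ z ∈ S, ∑ i, η i * wNormSq pw (T i z.1 - z.2) ≤ wNormSq pw (z.1 - z.2))
    (hlt : ∀ z ∈ A, ∑ i, η i * wNormSq pw (T i z.1 - z.2) + ε ≤ wNormSq pw (z.1 - z.2)) :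
    couplingCost pw (markovCoupling η T γ) ^ 2 + ε * γ.real A ≤ couplingCost pw γ ^ 2 := by
  have hint : ∀ F : PiLp 2 E × PiLp 2 E → ℝ, Continuous F → Integrable F γ :=
    fun F hF => hF.integrable_of_ae_mem_isCompact hS hγS
  have hmarkov : couplingCost pw (markovCoupling η T γ) ^ 2 =
      ∫ z, ∑ i, η i * wNormSq pw (T i z.1 - z.2) ∂γ := by
    rw [couplingCost_sq hpw, integral_markovCoupling (fun i => (hT i).measurable) hη
      (by fun_prop : Continuous _).stronglyMeasurable fun i => hint _ (by fun_prop),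
      integral_finsetSum _ fun i _ => hint _ (by fun_prop)]
    simp only [integral_const_mul]
  have hgap := mul_measureReal_le_integral (γ := γ) (by fun_prop) hS hγS hA
    (fun z hz => sub_nonneg.2 (hle z hz)) (fun z hz => le_sub_iff_add_le'.2 (hlt z hz))
  rw [integral_sub (hint _ (by fun_prop)) (hint _ (by fun_prop))] at hgap
  rw [hmarkov, couplingCost_sq hpw]
  linarith

end MarkovCoupling

variable {m : ℕ} {I : Type*} [Fintype I]
variable {E : Fin m → Type*} [∀ j, NormedAddCommGroup (E j)]
  [∀ j, InnerProductSpace ℝ (E j)] [∀ j, FiniteDimensional ℝ (E j)]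
variable [∀ j, MeasurableSpace (E j)] [∀ j, BorelSpace (E j)]
variable [MeasurableSpace (PiLp 2 E)] [BorelSpace (PiLp 2 E)]

theorem statement6_general
    (M : I → Finset (Fin m))
    (η : I → ℝ) (hη : ∀ i, 0 ≤ η i) (hηsum : ∑ i : I, η i = 1)
    (pw : Fin m → ℝ)
    (hp : ∀ j, 0 < pw j)
    (T' : ∀ j, PiLp 2 E → E j) (hcont : ∀ j, Continuous (T' j))
    (G : Set (PiLp 2 E)) (hG : IsCompact G)
    (C : Set (PiLp 2 E))
    (hC : C = {x ∈ G | ∀ i, 0 < η i → blockMap M T' i x = x})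
    (hpara : ∀ y ∈ C, ∀ x ∈ G \ C,
      ∑ i : I, η i * wNormSq pw (blockMap M T' i x - y) < wNormSq pw (x - y)) :
    ∀ π : Measure (PiLp 2 E), IsProbabilityMeasure π → π Cᶜ = 0 →
      ∀ μ : Measure (PiLp 2 E), MemP2 G μ → 0 < μ (G \ C) →
        W2 pw (markovOp η (blockMap M T') μ) π < W2 pw μ π := by
  rintro π hπ hπC μ ⟨hμ, hμG, -⟩ hμGC
  set T := blockMap M T'
  have hT : ∀ i, Continuous (T i) := continuous_blockMap M hcont
  have hCc : IsCompact C := by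
    have hfix : IsClosed {x | ∀ i, 0 < η i → T i x = x} := by
      simp only [Set.ofPred_forall]
      exact isClosed_biInter fun i _ => isClosed_eq (hT i) continuous_id
    exact hG.of_isClosed_subset (hC ▸ hG.isClosed.inter hfix) (hC ▸ Set.sep_subset _ _)
  obtain ⟨K, hKGC, hK, hμK⟩ :=
    (hG.measurableSet.diff hCc.measurableSet).exists_lt_isCompact hμGC
  have hle : ∀ z ∈ G ×ˢ C, ∑ i, η i * wNormSq pw (T i z.1 - z.2) ≤ wNormSq pw (z.1 - z.2) := by
    rintro ⟨x, y⟩ ⟨hx, hy⟩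
    by_cases hxC : x ∈ C
    · exact (sum_mul_apply_eq_of_isFixedPt hη hηsum (hC ▸ hxC).2 (fun u => wNormSq pw (u - y))).le
    · exact (hpara y hy x ⟨hx, hxC⟩).le
  obtain ⟨ε, hε, hεK⟩ := (hK.prod hCc).exists_pos_forall_add_le (by fun_prop) (by fun_prop)
    fun z hz => hpara z.2 hz.2 z.1 (hKGC hz.1)
  have hgain : 0 < ε * μ.real K := mul_pos hε (ENNReal.toReal_pos hμK.ne' (measure_ne_top μ K))
  refine W2_lt_of_forall_isCoupling ⟨_, isCoupling_prod μ π⟩ hgain fun γ hγ =>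
    ⟨_, hγ.markovCoupling (fun i => (hT i).measurable) hη hηsum, ?_⟩
  have : IsProbabilityMeasure γ := hγ.1
  rw [← hγ.measureReal_prod hK.measurableSet hCc.measurableSet hπC]
  exact couplingCost_markovCoupling_sq_add_le hη hT (fun j => (hp j).le) (hG.prod hCc)
    (hγ.ae_mem_prod hμG hπC) (hK.measurableSet.prod hCc.measurableSet) hle hεK

/-- on a compact set `G`, under the squared paracontraction-in-expectation property
w.r.t. the common fixed point set `C`, the Markov operator is a paracontraction w.r.t. `d_{W2,p}`. -/
theorem statement6
    (M : I → Finset (Fin m)) (hM : ∀ i, (M i).Nonempty)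
    (i₁ : I) (hi₁ : M i₁ = Finset.univ)
    (η : I → ℝ) (hη : ∀ i, 0 ≤ η i) (hηsum : ∑ i : I, η i = 1)
    (pw : Fin m → ℝ) (hpw : ∀ j, pw j = ∑ i : I, if j ∈ M i then η i else 0)
    (hp : ∀ j, 0 < pw j)
    (T' : ∀ j, PiLp 2 E → E j) (hcont : ∀ j, Continuous (T' j))
    (G : Set (PiLp 2 E)) (hG : IsCompact G)
    (hself : ∀ i, Set.MapsTo (blockMap M T' i) G G)
    (C : Set (PiLp 2 E))
    (hC : C = {x ∈ G | ∀ i, 0 < η i → blockMap M T' i x = x})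
    (hCne : C.Nonempty)
    (hpara : ∀ y ∈ C, ∀ x ∈ G \ C,
      ∑ i : I, η i * wNormSq pw (blockMap M T' i x - y) < wNormSq pw (x - y)) :
    ∀ π : Measure (PiLp 2 E), IsProbabilityMeasure π → π Cᶜ = 0 →
      ∀ μ : Measure (PiLp 2 E), MemP2 G μ → 0 < μ (G \ C) →
        W2 pw (markovOp η (blockMap M T') μ) π < W2 pw μ π :=
  statement6_general M η hη hηsum pw hp T' hcont G hG C hC hpara
end

section
/- Let G ⊆ E be compact, let each T'_j be continuous with each T_i a self-map of G, let C := {x ∈ G : T_i x = x for every i with η_i > 0} be nonempty, and suppose the paracontraction-in-expectation property holds: Σ_{i∈𝕀} η_i ‖T_i x − y‖_p < ‖x − y‖_p for every y ∈ C and every x ∈ G \ C. Then a Borel probability measure π on G is invariant for the Markov operator 𝒫 (i.e., π𝒫 = π) if and only if the support of π is contained in C. -/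
/-!
Fix `y ∈ C` and take `V x = ‖x - y‖_p` as a Lyapunov function. On `G` the average
`∑ᵢ ηᵢ V (Tᵢ x)` is at most `V x`, strictly off `C` by paracontraction and with equality on `C`,
where every `Tᵢ` with `ηᵢ > 0` fixes `x`. Both functions are continuous, hence integrable over
the compact `G`, and invariance of `π` makes their integrals equal, so they agree `π`-a.e. and
`π` lives on `C`. Conversely, if `π` lives on `C`, each `Tᵢ` with `ηᵢ > 0` is `π`-a.e. the
identity, so `π𝒫 = π`.
-/

open Finset MeasureTheory Filter
open scoped RealInnerProductSpace

section

variable {m : ℕ} {E : Fin m → Type*} [∀ j, NormedAddCommGroup (E j)]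

theorem continuous_wNorm (pw : Fin m → ℝ) : Continuous (wNorm pw : PiLp 2 E → ℝ) := by
  unfold wNorm wNormSq
  fun_prop

end

section

variable {m : ℕ} {E : Fin m → Type*} {I : Type*} [Fintype I] [MeasurableSpace (PiLp 2 E)]
  {η : I → ℝ} {T : I → PiLp 2 E → PiLp 2 E} {π : Measure (PiLp 2 E)}

theorem markovOp_eq_self_of_ae_fixed (hη : ∀ i, 0 ≤ η i) (hηsum : ∑ i, η i = 1)
    (hfix : ∀ i, 0 < η i → T i =ᵐ[π] id) : markovOp η T π = π := by
  have hterm : ∀ i, ENNReal.ofReal (η i) • π.map (T i) = ENNReal.ofReal (η i) • π := by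
    intro i
    rcases (hη i).lt_or_eq with hpos | hzero
    · rw [Measure.map_congr (hfix i hpos), Measure.map_id]
    · simp [← hzero]
  rw [markovOp, Finset.sum_congr rfl fun i _ => hterm i, ← Finset.sum_smul,
    ← ENNReal.ofReal_sum_of_nonneg fun i _ => hη i, hηsum, ENNReal.ofReal_one, one_smul]

theorem integral_markovOp (hη : ∀ i, 0 ≤ η i) (hT : ∀ i, AEMeasurable (T i) π)
    {f : PiLp 2 E → ℝ} (hf : StronglyMeasurable f) (hfT : ∀ i, Integrable (fun x => f (T i x)) π) :
    ∫ x, f x ∂(markovOp η T π) = ∫ x, ∑ i, η i * f (T i x) ∂π := by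
  have hmap : ∀ i, Integrable f (π.map (T i)) := fun i =>
    (integrable_map_measure hf.aestronglyMeasurable (hT i)).mpr (hfT i)
  rw [markovOp, integral_finsetSum_measure fun i _ => (hmap i).smul_measure ENNReal.ofReal_ne_top,
    integral_finsetSum _ fun i _ => (hfT i).const_mul _]
  refine Finset.sum_congr rfl fun i _ => ?_
  rw [integral_smul_measure, ENNReal.toReal_ofReal (hη i), smul_eq_mul,
    integral_map (hT i) hf.aestronglyMeasurable, integral_const_mul]

theorem ae_mem_of_markovOp_eq_self [∀ j, NormedAddCommGroup (E j)] [BorelSpace (PiLp 2 E)]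
    [IsFiniteMeasure π]
    {G C : Set (PiLp 2 E)} {V : PiLp 2 E → ℝ} (hη : ∀ i, 0 ≤ η i) (hηsum : ∑ i, η i = 1)
    (hT : ∀ i, Continuous (T i)) (hG : IsCompact G) (hπG : ∀ᵐ x ∂π, x ∈ G) (hV : Continuous V)
    (hfix : ∀ x ∈ C, ∀ i, 0 < η i → T i x = x)
    (hdesc : ∀ x ∈ G \ C, ∑ i, η i * V (T i x) < V x)
    (hinv : markovOp η T π = π) : ∀ᵐ x ∂π, x ∈ C := by
  have hint : ∀ u : PiLp 2 E → ℝ, Continuous u → Integrable u π := fun u hu => by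
    simpa [IntegrableOn, Measure.restrict_eq_self_of_ae_mem hπG] using
      hu.continuousOn.integrableOn_compact (μ := π) hG
  have hfixV : ∀ x ∈ C, ∑ i, η i * V (T i x) = V x := fun x hx => by
    calc ∑ i, η i * V (T i x) = ∑ i, η i * V x := Finset.sum_congr rfl fun i _ => by
          rcases (hη i).lt_or_eq with hpos | hzero
          · rw [hfix x hx i hpos]
          · simp [← hzero]
      _ = V x := by rw [← Finset.sum_mul, hηsum, one_mul]
  set W : PiLp 2 E → ℝ := fun x => ∑ i, η i * V (T i x)
  have hWint : Integrable W π :=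
    integrable_finsetSum _ fun i _ => (hint _ (hV.comp (hT i))).const_mul _
  have hWV : W ≤ᵐ[π] V := by
    filter_upwards [hπG] with x hxG
    by_cases hxC : x ∈ C
    · exact (hfixV x hxC).le
    · exact (hdesc x ⟨hxG, hxC⟩).le
  have hintegral : ∫ x, W x ∂π = ∫ x, V x ∂π := by
    conv_rhs => rw [← hinv]
    exact (integral_markovOp hη (fun i => (hT i).aemeasurable) hV.measurable.stronglyMeasurable
      fun i => hint _ (hV.comp (hT i))).symm
  have hWeqV : W =ᵐ[π] V := (integral_eq_iff_of_ae_le hWint (hint V hV) hWV).mp hintegral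
  filter_upwards [hπG, hWeqV] with x hxG hx
  by_contra hxC
  exact (hdesc x ⟨hxG, hxC⟩).ne hx

end

variable {m : ℕ} {I : Type*} [Fintype I]
variable {E : Fin m → Type*} [∀ j, NormedAddCommGroup (E j)]
  [∀ j, InnerProductSpace ℝ (E j)] [∀ j, FiniteDimensional ℝ (E j)]
variable [∀ j, MeasurableSpace (E j)] [∀ j, BorelSpace (E j)]
variable [MeasurableSpace (PiLp 2 E)] [BorelSpace (PiLp 2 E)]

theorem statement7_general
    (M : I → Finset (Fin m))
    (η : I → ℝ) (hη : ∀ i, 0 ≤ η i) (hηsum : ∑ i : I, η i = 1)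
    (pw : Fin m → ℝ)
    (T' : ∀ j, PiLp 2 E → E j) (hcont : ∀ j, Continuous (T' j))
    (G : Set (PiLp 2 E)) (hG : IsCompact G)
    (C : Set (PiLp 2 E))
    (hC : C = {x ∈ G | ∀ i, 0 < η i → blockMap M T' i x = x})
    (hCne : C.Nonempty)
    (hpara : ∀ y ∈ C, ∀ x ∈ G \ C,
      ∑ i : I, η i * wNorm pw (blockMap M T' i x - y) < wNorm pw (x - y)) :
    ∀ π : Measure (PiLp 2 E), IsProbabilityMeasure π → π Gᶜ = 0 →
      (markovOp η (blockMap M T') π = π ↔ π Cᶜ = 0) := by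
  intro π _ hπG
  obtain ⟨y, hy⟩ := hCne
  have hfix : ∀ x ∈ C, ∀ i, 0 < η i → blockMap M T' i x = x := by
    rw [hC]
    exact fun x hx => hx.2
  constructor
  · intro hinv
    exact ae_mem_of_markovOp_eq_self hη hηsum (continuous_blockMap M hcont) hG hπG
      ((continuous_wNorm pw).comp (continuous_id.sub continuous_const)) hfix (hpara y hy) hinv
  · intro hπC
    exact markovOp_eq_self_of_ae_fixed hη hηsum fun i hi => by
      filter_upwards [show ∀ᵐ x ∂π, x ∈ C from hπC] with x hx using hfix x hx i hi

/-- on a compact set `G`, under the paracontraction-in-expectation property w.r.t.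
the common fixed point set `C`, a Borel probability measure on `G` is invariant for the Markov
operator iff its support is contained in `C`. -/
theorem statement7
    (M : I → Finset (Fin m)) (hM : ∀ i, (M i).Nonempty)
    (i₁ : I) (hi₁ : M i₁ = Finset.univ)
    (η : I → ℝ) (hη : ∀ i, 0 ≤ η i) (hηsum : ∑ i : I, η i = 1)
    (pw : Fin m → ℝ) (hpw : ∀ j, pw j = ∑ i : I, if j ∈ M i then η i else 0)
    (hp : ∀ j, 0 < pw j)
    (T' : ∀ j, PiLp 2 E → E j) (hcont : ∀ j, Continuous (T' j))
    (G : Set (PiLp 2 E)) (hG : IsCompact G)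
    (hself : ∀ i, Set.MapsTo (blockMap M T' i) G G)
    (C : Set (PiLp 2 E))
    (hC : C = {x ∈ G | ∀ i, 0 < η i → blockMap M T' i x = x})
    (hCne : C.Nonempty)
    (hpara : ∀ y ∈ C, ∀ x ∈ G \ C,
      ∑ i : I, η i * wNorm pw (blockMap M T' i x - y) < wNorm pw (x - y)) :
    ∀ π : Measure (PiLp 2 E), IsProbabilityMeasure π → π Gᶜ = 0 →
      (markovOp η (blockMap M T') π = π ↔ π Cᶜ = 0) :=
  statement7_general M η hη hηsum pw T' hcont G hG C hC hCne hpara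
end

section
/- Let each T'_j be Borel measurable, let C := {x ∈ E : T_i x = x for every i with η_i > 0}, let μ ∈ 𝒫₂(E), and let π be a Borel probability measure whose support is contained in C. Then for EVERY coupling γ of (μ, π): ∫ Σ_{i∈𝕀} η_i ψ_p(x, y, T_i x, T_i y) dγ(x,y) = ∫ ‖x − T_1 x‖² dμ(x), where T_1 x = (T'_1(x),…,T'_m(x)) is the map using all blocks. -/
open Finset MeasureTheory Filter
open scoped RealInnerProductSpace

noncomputable section

variable {m : ℕ} {I : Type*} [Fintype I]
variable {E : Fin m → Type*} [∀ j, NormedAddCommGroup (E j)]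
  [∀ j, InnerProductSpace ℝ (E j)] [∀ j, FiniteDimensional ℝ (E j)]
variable [∀ j, MeasurableSpace (E j)] [∀ j, BorelSpace (E j)]
variable [MeasurableSpace (PiLp 2 E)] [BorelSpace (PiLp 2 E)]

/-!
Where `π` lives every `Tᵢ` with `ηᵢ > 0` fixes `y`, so `γ`-a.e. the discrepancy is
`∑ᵢ ηᵢ ‖x - Tᵢ x‖_p²`, a function of `x` alone. Exchanging the sums over `i` and over blocks `j`,
block `j` collects the weight `∑_{i : j ∈ Mᵢ} ηᵢ = pⱼ`, which cancels `pⱼ⁻¹` and leaves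
`‖x - T₁ x‖²`; its `γ`-integral is its `μ`-integral because `μ` is the first marginal.
-/

section

variable {ι : Type*} {F : Fin m → Type*}

namespace IsCoupling

variable [MeasurableSpace (PiLp 2 F)] {γ : Measure (PiLp 2 F × PiLp 2 F)}
  {μ ν : Measure (PiLp 2 F)}

lemma ae_snd (hγ : IsCoupling γ μ ν) {p : PiLp 2 F → Prop} (hp : ∀ᵐ y ∂ν, p y) :
    ∀ᵐ z ∂γ, p z.2 :=
  ae_of_ae_map measurable_snd.aemeasurable (hγ.2.2 ▸ hp)

lemma integral_comp_fst {G : Type*} [NormedAddCommGroup G] [NormedSpace ℝ G]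
    (hγ : IsCoupling γ μ ν) {f : PiLp 2 F → G} (hf : AEStronglyMeasurable f μ) :
    ∫ z, f z.1 ∂γ = ∫ x, f x ∂μ := by
  rw [← hγ.2.1] at hf ⊢
  exact (integral_map measurable_fst.aemeasurable hf).symm

end IsCoupling

variable [∀ j, NormedAddCommGroup (F j)]

lemma wNormSq_sub_blockMap (pw : Fin m → ℝ) (M : ι → Finset (Fin m))
    (T' : ∀ j, PiLp 2 F → F j) (i : ι) (x : PiLp 2 F) :
    wNormSq pw (x - blockMap M T' i x) = ∑ j ∈ M i, (pw j)⁻¹ * ‖x j - T' j x‖ ^ 2 := by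
  rw [wNormSq, ← sum_subset (subset_univ (M i)) fun j _ hj => by simp [blockMap, hj]]
  exact sum_congr rfl fun j hj => by simp [blockMap, hj]

lemma norm_sub_blockMap_sq_of_eq_univ (M : ι → Finset (Fin m)) (T' : ∀ j, PiLp 2 F → F j)
    {i : ι} (hi : M i = univ) (x : PiLp 2 F) :
    ‖x - blockMap M T' i x‖ ^ 2 = ∑ j, ‖x j - T' j x‖ ^ 2 := by
  rw [PiLp.norm_sq_eq_of_L2]
  exact sum_congr rfl fun j _ => by simp [blockMap, hi]

lemma sum_mul_wNormSq_sub_blockMap [Fintype ι] (M : ι → Finset (Fin m)) (η : ι → ℝ)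
    {pw : Fin m → ℝ} (hpw : ∀ j, pw j = ∑ i, if j ∈ M i then η i else 0) (hp : ∀ j, pw j ≠ 0)
    (T' : ∀ j, PiLp 2 F → F j) (x : PiLp 2 F) :
    ∑ i, η i * wNormSq pw (x - blockMap M T' i x) = ∑ j, ‖x j - T' j x‖ ^ 2 := by
  simp_rw [wNormSq_sub_blockMap, mul_sum]
  rw [sum_comm' (t' := univ) (s' := fun j => {i | j ∈ M i}) (by simp)]
  refine sum_congr rfl fun j _ => ?_
  rw [← sum_mul, sum_filter, ← hpw, mul_inv_cancel_left₀ (hp j)]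

lemma discrep_eq_of_forall_pos_fixed [Fintype ι] (pw : Fin m → ℝ) {η : ι → ℝ}
    (hη : ∀ i, 0 ≤ η i) {T : ι → PiLp 2 F → PiLp 2 F} {z : PiLp 2 F × PiLp 2 F}
    (hz : ∀ i, 0 < η i → T i z.2 = z.2) :
    discrep pw η T z = ∑ i, η i * wNormSq pw (z.1 - T i z.1) := by
  refine sum_congr rfl fun i _ => ?_
  rcases (hη i).eq_or_lt with hi | hi
  · simp [← hi]
  · rw [hz i hi, sub_self, sub_zero]

lemma measurable_blockMap [∀ j, MeasurableSpace (F j)] [∀ j, BorelSpace (F j)]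
    [∀ j, SecondCountableTopology (F j)] [MeasurableSpace (PiLp 2 F)] [BorelSpace (PiLp 2 F)]
    (M : ι → Finset (Fin m)) {T' : ∀ j, PiLp 2 F → F j} (hT' : ∀ j, Measurable (T' j))
    (i : ι) : Measurable (blockMap M T' i) := by
  refine (PiLp.continuous_toLp 2 F).measurable.comp (measurable_pi_lambda _ fun j => ?_)
  by_cases hj : j ∈ M i
  · simpa only [hj, if_true] using hT' j
  · simpa only [hj, if_false] using (PiLp.continuous_apply 2 F j).measurable

end

theorem statement15_general
    (M : I → Finset (Fin m))
    (i₁ : I) (hi₁ : M i₁ = Finset.univ)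
    (η : I → ℝ) (hη : ∀ i, 0 ≤ η i)
    (pw : Fin m → ℝ) (hpw : ∀ j, pw j = ∑ i : I, if j ∈ M i then η i else 0)
    (hp : ∀ j, 0 < pw j)
    (T' : ∀ j, PiLp 2 E → E j) (hmeas : ∀ j, Measurable (T' j))
    (C : Set (PiLp 2 E))
    (hC : C = {x : PiLp 2 E | ∀ i, 0 < η i → blockMap M T' i x = x})
    (μ : Measure (PiLp 2 E))
    (π : Measure (PiLp 2 E)) (hπC : π Cᶜ = 0)
    (γ : Measure (PiLp 2 E × PiLp 2 E)) (hγ : IsCoupling γ μ π) :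
    ∫ z, discrep pw η (blockMap M T') z ∂γ
      = ∫ x, ‖x - blockMap M T' i₁ x‖ ^ 2 ∂μ := by
  have hfixed : ∀ᵐ z ∂γ, ∀ i, 0 < η i → blockMap M T' i z.2 = z.2 :=
    hγ.ae_snd (hC ▸ mem_ae_iff.2 hπC)
  have hresidual : Measurable fun x => ‖x - blockMap M T' i₁ x‖ ^ 2 :=
    (measurable_id.sub (measurable_blockMap M hmeas i₁)).norm.pow_const 2
  calc ∫ z, discrep pw η (blockMap M T') z ∂γ
      = ∫ z, ‖z.1 - blockMap M T' i₁ z.1‖ ^ 2 ∂γ := by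
        refine integral_congr_ae (hfixed.mono fun z hz => ?_)
        rw [discrep_eq_of_forall_pos_fixed pw hη hz,
          sum_mul_wNormSq_sub_blockMap M η hpw (fun j => (hp j).ne')]
        exact (norm_sub_blockMap_sq_of_eq_univ M T' hi₁ z.1).symm
    _ = ∫ x, ‖x - blockMap M T' i₁ x‖ ^ 2 ∂μ :=
        hγ.integral_comp_fst hresidual.aestronglyMeasurable

/-- for every coupling `γ` of `μ` and a measure `π` concentrated on the common
fixed point set `C`, the expected transport discrepancy equals the mean squared fixed-point
residual of `T₁` w.r.t. `μ`. -/
theorem statement15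
    (M : I → Finset (Fin m)) (hM : ∀ i, (M i).Nonempty)
    (i₁ : I) (hi₁ : M i₁ = Finset.univ)
    (η : I → ℝ) (hη : ∀ i, 0 ≤ η i) (hηsum : ∑ i : I, η i = 1)
    (pw : Fin m → ℝ) (hpw : ∀ j, pw j = ∑ i : I, if j ∈ M i then η i else 0)
    (hp : ∀ j, 0 < pw j)
    (T' : ∀ j, PiLp 2 E → E j) (hmeas : ∀ j, Measurable (T' j))
    (C : Set (PiLp 2 E))
    (hC : C = {x : PiLp 2 E | ∀ i, 0 < η i → blockMap M T' i x = x})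
    (μ : Measure (PiLp 2 E)) (hμ : MemP2 Set.univ μ)
    (π : Measure (PiLp 2 E)) (hπ : IsProbabilityMeasure π) (hπC : π Cᶜ = 0)
    (γ : Measure (PiLp 2 E × PiLp 2 E)) (hγ : IsCoupling γ μ π) :
    ∫ z, discrep pw η (blockMap M T') z ∂γ
      = ∫ x, ‖x - blockMap M T' i₁ x‖ ^ 2 ∂μ :=
  statement15_general M i₁ hi₁ η hη pw hpw hp T' hmeas C hC μ π hπC γ hγ
end
end
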